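/- arXiv:2605.06152 — 3 statements merged into one kernel-verified Lean document; each statement's English description precedes it below -/
import Mathlib

section
/- Let V be a real normed vector space, α > 0, β > 0, s = √(α·β), and let (u_t), (v_t) in V satisfy u_{t+1} = u_t − α·v_t and v_{t+1} = v_t − β·u_t. Suppose w⁻ := √β·u_0 − √α·v_0 ≠ 0. Then ‖u_t‖/(1+s)^t → ‖w⁻‖/(2√β) > 0 and ‖v_t‖/(1+s)^t → ‖w⁻‖/(2√α) > 0 as t → ∞; in particular ‖u_t‖ and ‖v_t‖ grow exponentially with asymptotic ratio (1+s) = 1 + √(αβ) per step. -/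
open Filter

/-- **Theorem (exponential growth of the NFI dynamics).**
For `u_{t+1} = u_t − α·v_t`, `v_{t+1} = v_t − β·u_t` with `s = √(αβ)` and
`w⁻ = √β·u_0 − √α·v_0 ≠ 0`, we have `‖u_t‖/(1+s)^t → ‖w⁻‖/(2√β) > 0` and
`‖v_t‖/(1+s)^t → ‖w⁻‖/(2√α) > 0`. -/
theorem nfi_exponential_growth
    {V : Type*} [NormedAddCommGroup V] [NormedSpace ℝ V]
    (α β : ℝ) (hα : 0 < α) (hβ : 0 < β)
    (s : ℝ) (hs : s = Real.sqrt (α * β))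
    (u v : ℕ → V)
    (hu : ∀ t, u (t + 1) = u t - α • v t)
    (hv : ∀ t, v (t + 1) = v t - β • u t)
    (w : V) (hw : w = Real.sqrt β • u 0 - Real.sqrt α • v 0) (hw0 : w ≠ 0) :
    Tendsto (fun t : ℕ => ‖u t‖ / (1 + s) ^ t) atTop
        (nhds (‖w‖ / (2 * Real.sqrt β))) ∧
    0 < ‖w‖ / (2 * Real.sqrt β) ∧
    Tendsto (fun t : ℕ => ‖v t‖ / (1 + s) ^ t) atTop
        (nhds (‖w‖ / (2 * Real.sqrt α))) ∧
    0 < ‖w‖ / (2 * Real.sqrt α) := by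
  have hsa : (0:ℝ) < Real.sqrt α := Real.sqrt_pos.2 hα
  have hsb : (0:ℝ) < Real.sqrt β := Real.sqrt_pos.2 hβ
  set sa := Real.sqrt α with hsadef
  set sb := Real.sqrt β with hsbdef
  have hsaa : sa * sa = α := Real.mul_self_sqrt hα.le
  have hsbb : sb * sb = β := Real.mul_self_sqrt hβ.le
  have hs' : s = sa * sb := by rw [hs, hsadef, hsbdef, Real.sqrt_mul hα.le]
  have hspos : (0:ℝ) < s := by rw [hs']; positivity
  have h1s : (0:ℝ) < 1 + s := by linarith
  set a : ℕ → V := fun t => sb • u t - sa • v t with hadef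
  set b : ℕ → V := fun t => sb • u t + sa • v t with hbdef
  have ha : ∀ t, a t = (1 + s) ^ t • w := by
    intro t
    induction t with
    | zero => simp [hadef, hw]
    | succ t ih =>
      have step : a (t + 1) = (1 + s) • a t := by
        simp only [hadef, hu t, hv t, hs']
        rw [show α = sa * sa from hsaa.symm, show β = sb * sb from hsbb.symm]
        module
      rw [step, ih, smul_smul, ← pow_succ']
  have hb : ∀ t, b t = (1 - s) ^ t • b 0 := by
    intro t
    induction t with
    | zero => simp
    | succ t ih =>
      have step : b (t + 1) = (1 - s) • b t := by
        simp only [hbdef, hu t, hv t, hs']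
        rw [show α = sa * sa from hsaa.symm, show β = sb * sb from hsbb.symm]
        module
      rw [step, ih, smul_smul, ← pow_succ']
  set r : ℝ := (1 - s) / (1 + s) with hrdef
  have hr : |r| < 1 := by
    rw [hrdef, abs_div, abs_of_pos h1s, div_lt_one h1s]
    rcases abs_cases (1 - s) with ⟨h, _⟩ | ⟨h, _⟩ <;> rw [h] <;> linarith
  have hrlim : Tendsto (fun t : ℕ => r ^ t • b 0) atTop (nhds 0) := by
    have := (tendsto_pow_atTop_nhds_zero_of_abs_lt_one hr).smul_const (b 0)
    simpa using this
  -- key rewriting of the u-sequence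
  have hu_eq : ∀ t : ℕ, ‖u t‖ / (1 + s) ^ t = ‖w + r ^ t • b 0‖ / (2 * sb) := by
    intro t
    have hab : a t + b t = (2 * sb) • u t := by
      simp only [hadef, hbdef]; module
    have h2sb : (0:ℝ) < 2 * sb := by positivity
    have hnorm : ‖a t + b t‖ = (2 * sb) * ‖u t‖ := by
      rw [hab, norm_smul, Real.norm_eq_abs, abs_of_pos h2sb]
    have hpow : (0:ℝ) < (1 + s) ^ t := pow_pos h1s t
    have hscale : ((1 + s) ^ t)⁻¹ • (a t + b t) = w + r ^ t • b 0 := by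
      rw [ha t, hb t, smul_add, smul_smul, smul_smul, inv_mul_cancel₀ hpow.ne',
        one_smul, hrdef, div_pow, div_eq_inv_mul]
    have : ‖w + r ^ t • b 0‖ = ‖u t‖ * (2 * sb) / (1 + s) ^ t := by
      rw [← hscale, norm_smul, Real.norm_eq_abs, abs_of_pos (inv_pos.2 hpow),
        hnorm]
      ring
    rw [this]
    field_simp
  have hv_eq : ∀ t : ℕ, ‖v t‖ / (1 + s) ^ t = ‖r ^ t • b 0 - w‖ / (2 * sa) := by
    intro t
    have hab : b t - a t = (2 * sa) • v t := by
      simp only [hadef, hbdef]; module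
    have h2sa : (0:ℝ) < 2 * sa := by positivity
    have hnorm : ‖b t - a t‖ = (2 * sa) * ‖v t‖ := by
      rw [hab, norm_smul, Real.norm_eq_abs, abs_of_pos h2sa]
    have hpow : (0:ℝ) < (1 + s) ^ t := pow_pos h1s t
    have hscale : ((1 + s) ^ t)⁻¹ • (b t - a t) = r ^ t • b 0 - w := by
      rw [ha t, hb t, smul_sub, smul_smul, smul_smul, inv_mul_cancel₀ hpow.ne',
        one_smul, hrdef, div_pow, div_eq_inv_mul]
    have : ‖r ^ t • b 0 - w‖ = ‖v t‖ * (2 * sa) / (1 + s) ^ t := by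
      rw [← hscale, norm_smul, Real.norm_eq_abs, abs_of_pos (inv_pos.2 hpow),
        hnorm]
      ring
    rw [this]
    field_simp
  have hwpos : (0:ℝ) < ‖w‖ := norm_pos_iff.2 hw0
  have hlim_u : Tendsto (fun t : ℕ => ‖u t‖ / (1 + s) ^ t) atTop
      (nhds (‖w‖ / (2 * sb))) := by
    simp only [hu_eq]
    have h1 : Tendsto (fun t : ℕ => w + r ^ t • b 0) atTop (nhds w) := by
      simpa using (tendsto_const_nhds (x := w) (f := atTop)).add hrlim
    exact (h1.norm.div_const _)
  have hlim_v : Tendsto (fun t : ℕ => ‖v t‖ / (1 + s) ^ t) atTop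
      (nhds (‖w‖ / (2 * sa))) := by
    simp only [hv_eq]
    have h1 : Tendsto (fun t : ℕ => r ^ t • b 0 - w) atTop (nhds (-w)) := by
      simpa using hrlim.sub (tendsto_const_nhds (x := w) (f := atTop))
    have := (h1.norm.div_const (2 * sa))
    simpa using this
  exact ⟨hlim_u, by positivity, hlim_v, by positivity⟩
end

section
/- Let V be a real inner product space, α > 0, β > 0, and let (u_t), (v_t) in V satisfy u_{t+1} = u_t − α·v_t and v_{t+1} = v_t − β·u_t. Suppose √β·u_0 − √α·v_0 ≠ 0. Then the cosine similarity converges to −1: ⟨u_t, v_t⟩/(‖u_t‖·‖v_t‖) → −1 as t → ∞; i.e. u_t and v_t become asymptotically anti-parallel. -/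
open Filter
open scoped RealInnerProductSpace

/-- **Theorem (asymptotic anti-parallel alignment in the NFI dynamics).**
For `u_{t+1} = u_t − α·v_t`, `v_{t+1} = v_t − β·u_t` with `√β·u_0 − √α·v_0 ≠ 0`, the
cosine similarity `⟨u_t, v_t⟩/(‖u_t‖·‖v_t‖)` converges to `−1`. -/
theorem nfi_antiparallel_alignment
    {V : Type*} [NormedAddCommGroup V] [InnerProductSpace ℝ V]
    (α β : ℝ) (hα : 0 < α) (hβ : 0 < β)
    (u v : ℕ → V)
    (hu : ∀ t, u (t + 1) = u t - α • v t)
    (hv : ∀ t, v (t + 1) = v t - β • u t)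
    (hw0 : Real.sqrt β • u 0 - Real.sqrt α • v 0 ≠ 0) :
    Tendsto (fun t : ℕ => ⟪u t, v t⟫ / (‖u t‖ * ‖v t‖)) atTop (nhds (-1)) := by
  set a := Real.sqrt α with ha_def
  set b := Real.sqrt β with hb_def
  have ha : 0 < a := Real.sqrt_pos.2 hα
  have hb : 0 < b := Real.sqrt_pos.2 hβ
  have ha2 : a ^ 2 = α := Real.sq_sqrt hα.le
  have hb2 : b ^ 2 = β := Real.sq_sqrt hβ.le
  set γ := a * b with hγ_def
  have hγ : 0 < γ := mul_pos ha hb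
  set p0 : V := b • u 0 + a • v 0 with hp0_def
  set q0 : V := b • u 0 - a • v 0 with hq0_def
  -- diagonalized dynamics
  have key : ∀ t, b • u t + a • v t = (1 - γ) ^ t • p0 ∧
      b • u t - a • v t = (1 + γ) ^ t • q0 := by
    intro t
    induction t with
    | zero => simp [hp0_def, hq0_def]
    | succ t ih =>
      obtain ⟨ih1, ih2⟩ := ih
      have hu' : u (t + 1) = u t - (a ^ 2) • v t := by rw [hu, ha2]
      have hv' : v (t + 1) = v t - (b ^ 2) • u t := by rw [hv, hb2]
      constructor
      · have : b • u (t + 1) + a • v (t + 1) = (1 - γ) • (b • u t + a • v t) := by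
          rw [hu', hv', hγ_def]; module
        rw [this, ih1, smul_smul, pow_succ]
        ring_nf
      · have : b • u (t + 1) - a • v (t + 1) = (1 + γ) • (b • u t - a • v t) := by
          rw [hu', hv', hγ_def]; module
        rw [this, ih2, smul_smul, pow_succ]
        ring_nf
  set r := (1 - γ) / (1 + γ) with hr_def
  have h1γ : (0:ℝ) < 1 + γ := by linarith
  have hr_abs : |r| < 1 := by
    rw [hr_def, abs_div, abs_of_pos h1γ, div_lt_one h1γ, abs_lt]
    constructor <;> linarith
  have hc : ∀ t : ℕ, (1 - γ) ^ t = (1 + γ) ^ t * r ^ t := by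
    intro t
    rw [hr_def, ← mul_pow, mul_div_cancel₀ _ (ne_of_gt h1γ)]
  set x : ℕ → V := fun t => r ^ t • p0 + q0 with hx_def
  set y : ℕ → V := fun t => r ^ t • p0 - q0 with hy_def
  -- explicit formulas
  have h2b : (2:ℝ) * b ≠ 0 := by positivity
  have h2a : (2:ℝ) * a ≠ 0 := by positivity
  have hut : ∀ t, u t = ((1 + γ) ^ t / (2 * b)) • x t := by
    intro t
    obtain ⟨h1, h2⟩ := key t
    have hsum : (2 * b) • u t = (1 + γ) ^ t • x t := by
      have step : (2 * b) • u t = (b • u t + a • v t) + (b • u t - a • v t) := by module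
      rw [step, h1, h2, hc t, hx_def]
      simp only [mul_smul, smul_add]
    calc u t = ((2 * b)⁻¹ * (2 * b)) • u t := by rw [inv_mul_cancel₀ h2b, one_smul]
      _ = (2 * b)⁻¹ • ((2 * b) • u t) := by rw [mul_smul]
      _ = (2 * b)⁻¹ • ((1 + γ) ^ t • x t) := by rw [hsum]
      _ = ((1 + γ) ^ t / (2 * b)) • x t := by rw [smul_smul, div_eq_inv_mul]
  have hvt : ∀ t, v t = ((1 + γ) ^ t / (2 * a)) • y t := by
    intro t
    obtain ⟨h1, h2⟩ := key t
    have hsum : (2 * a) • v t = (1 + γ) ^ t • y t := by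
      have step : (2 * a) • v t = (b • u t + a • v t) - (b • u t - a • v t) := by module
      rw [step, h1, h2, hc t, hy_def]
      simp only [mul_smul, smul_sub]
    calc v t = ((2 * a)⁻¹ * (2 * a)) • v t := by rw [inv_mul_cancel₀ h2a, one_smul]
      _ = (2 * a)⁻¹ • ((2 * a) • v t) := by rw [mul_smul]
      _ = (2 * a)⁻¹ • ((1 + γ) ^ t • y t) := by rw [hsum]
      _ = ((1 + γ) ^ t / (2 * a)) • y t := by rw [smul_smul, div_eq_inv_mul]
  -- rewrite cosine
  have heq : (fun t : ℕ => ⟪u t, v t⟫ / (‖u t‖ * ‖v t‖))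
      = fun t : ℕ => ⟪x t, y t⟫ / (‖x t‖ * ‖y t‖) := by
    funext t
    have hcb : 0 < (1 + γ) ^ t / (2 * b) := by positivity
    have hca : 0 < (1 + γ) ^ t / (2 * a) := by positivity
    rw [hut t, hvt t, real_inner_smul_left, real_inner_smul_right, norm_smul, norm_smul,
      Real.norm_eq_abs, Real.norm_eq_abs, abs_of_pos hcb, abs_of_pos hca]
    rw [show ((1 + γ) ^ t / (2 * b)) * ‖x t‖ * (((1 + γ) ^ t / (2 * a)) * ‖y t‖)
        = (((1 + γ) ^ t / (2 * b)) * ((1 + γ) ^ t / (2 * a))) * (‖x t‖ * ‖y t‖) by ring]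
    rw [show ((1 + γ) ^ t / (2 * b)) * (((1 + γ) ^ t / (2 * a)) * ⟪x t, y t⟫)
        = (((1 + γ) ^ t / (2 * b)) * ((1 + γ) ^ t / (2 * a))) * ⟪x t, y t⟫ by ring]
    exact mul_div_mul_left _ _ (by positivity)
  rw [heq]
  -- limits
  have hr0 : Tendsto (fun t : ℕ => r ^ t) atTop (nhds 0) :=
    tendsto_pow_atTop_nhds_zero_of_abs_lt_one hr_abs
  have hx_lim : Tendsto x atTop (nhds q0) := by
    have : Tendsto (fun t : ℕ => r ^ t • p0) atTop (nhds ((0:ℝ) • p0)) :=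
      hr0.smul_const p0
    simpa using this.add_const q0
  have hy_lim : Tendsto y atTop (nhds (-q0)) := by
    have : Tendsto (fun t : ℕ => r ^ t • p0) atTop (nhds ((0:ℝ) • p0)) :=
      hr0.smul_const p0
    have := this.sub_const q0
    simpa using this
  have hq0norm : ‖q0‖ ≠ 0 := norm_ne_zero_iff.2 hw0
  have hnum : Tendsto (fun t : ℕ => ⟪x t, y t⟫) atTop (nhds ⟪q0, -q0⟫) :=
    hx_lim.inner hy_lim
  have hden : Tendsto (fun t : ℕ => ‖x t‖ * ‖y t‖) atTop (nhds (‖q0‖ * ‖-q0‖)) :=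
    (hx_lim.norm).mul (hy_lim.norm)
  have hfinal := hnum.div hden (by simp [hq0norm])
  have hval : ⟪q0, -q0⟫ / (‖q0‖ * ‖-q0‖) = -1 := by
    rw [inner_neg_right, norm_neg, real_inner_self_eq_norm_mul_norm, neg_div,
      div_self (by positivity : ‖q0‖ * ‖q0‖ ≠ 0)]
  rwa [hval] at hfinal
end

section
/- Let K, d ≥ 1, let ŷ ∈ ℝ^K be a probability vector (nonnegative entries summing to 1) and y ∈ ℝ^K a one-hot vector (one entry 1, the rest 0). Let J be a real K×d matrix with operator norm ‖J‖ ≤ M₁, and let A_1, …, A_K be real symmetric d×d matrices with operator norm ‖A_k‖ ≤ M₂ for all k. Define H = Jᵀ·(diag(ŷ) − ŷŷᵀ)·J + ∑_{k=1}^K (ŷ_k − y_k)·A_k. Then the operator norm of H satisfies ‖H‖ ≤ M₁²·(1 − ‖ŷ‖₂²) + M₂·∑_{k=1}^K |ŷ_k − y_k|. -/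
set_option maxHeartbeats 1000000


open Matrix

/-- The ℓ²→ℓ² operator norm of a real rectangular matrix. -/
noncomputable def matOpNorm {m n : ℕ} (M : Matrix (Fin m) (Fin n) ℝ) : ℝ :=
  ‖LinearMap.toContinuousLinearMap (Matrix.toEuclideanLin M)‖

open scoped Matrix.Norms.L2Operator

lemma matOpNorm_eq {m n : ℕ} (M : Matrix (Fin m) (Fin n) ℝ) : matOpNorm M = ‖M‖ := rfl

lemma rankone_norm_le {K : ℕ} (v : Fin K → ℝ) :
    ‖Matrix.vecMulVec v v‖ ≤ ∑ i, v i ^ 2 := by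
  rw [Matrix.l2_opNorm_def]
  apply ContinuousLinearMap.opNorm_le_bound
  · positivity
  intro x
  set w : EuclideanSpace ℝ (Fin K) := (WithLp.equiv 2 (Fin K → ℝ)).symm v with hw
  have hx : (Matrix.vecMulVec v v).toEuclideanLin x
      = (v ⬝ᵥ (WithLp.equiv 2 (Fin K → ℝ)) x) • w := by
    rw [Matrix.toEuclideanLin_apply]
    ext i
    simp [Matrix.mulVec, Matrix.vecMulVec_apply, dotProduct, Finset.mul_sum, mul_comm,
      mul_left_comm, w]
    exact Finset.sum_congr rfl fun j _ => by ring
  have hinner : v ⬝ᵥ (WithLp.equiv 2 (Fin K → ℝ)) x = inner ℝ w x := by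
    simp [PiLp.inner_apply, dotProduct, w, RCLike.inner_apply]
    exact Finset.sum_congr rfl fun j _ => mul_comm _ _
  have hnw : ‖w‖ ^ 2 = ∑ i, v i ^ 2 := by
    rw [EuclideanSpace.norm_eq, Real.sq_sqrt (by positivity)]
    simp [w, sq_abs]
  have h0 : ((Matrix.toEuclideanLin ≪≫ₗ LinearMap.toContinuousLinearMap) (Matrix.vecMulVec v v)) x
      = Matrix.toEuclideanLin (Matrix.vecMulVec v v) x := rfl
  rw [h0, hx, norm_smul, hinner]
  calc ‖(inner ℝ w x : ℝ)‖ * ‖w‖ ≤ (‖w‖ * ‖x‖) * ‖w‖ := by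
        apply mul_le_mul_of_nonneg_right _ (norm_nonneg _)
        rw [Real.norm_eq_abs]
        exact abs_real_inner_le_norm w x
    _ = (∑ i, v i ^ 2) * ‖x‖ := by rw [← hnw]; ring

lemma B_decomp {K : ℕ} (yhat : Fin K → ℝ) (hsum : ∑ k, yhat k = 1) :
    Matrix.diagonal yhat - Matrix.vecMulVec yhat yhat
      = (1/2 : ℝ) • ∑ i, ∑ j, (yhat i * yhat j) •
          Matrix.vecMulVec ((Pi.single i 1 - Pi.single j 1 : Fin K → ℝ)) ((Pi.single i 1 - Pi.single j 1 : Fin K → ℝ)) := by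
  have S : ∀ (i m : Fin K), ((Pi.single i 1 : Fin K → ℝ)) m = if m = i then 1 else 0 := by
    intro i m; simp [Pi.single_apply]
  ext k l
  simp only [Matrix.sub_apply, Matrix.diagonal_apply, Matrix.vecMulVec_apply, Matrix.smul_apply,
    Matrix.sum_apply, smul_eq_mul, Pi.sub_apply, S]
  have hSl : ∑ j, yhat j * (if l = j then (1:ℝ) else 0) = yhat l := by
    simp [mul_ite]
  have hSk : ∑ j, yhat j * (if k = j then (1:ℝ) else 0) = yhat k := by
    simp [mul_ite]
  have hSkl : ∑ j, yhat j * ((if k = j then (1:ℝ) else 0) * (if l = j then 1 else 0))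
      = if k = l then yhat k else 0 := by
    have : ∀ j, yhat j * ((if k = j then (1:ℝ) else 0) * (if l = j then 1 else 0))
        = if k = j then (if l = j then yhat j else 0) else 0 := by
      intro j; split_ifs <;> ring
    rw [Finset.sum_congr rfl fun j _ => this j, Finset.sum_ite_eq]
    simp [eq_comm]
  have inner : ∀ i, (∑ j, yhat i * yhat j *
        (((if k = i then (1:ℝ) else 0) - (if k = j then 1 else 0))
          * ((if l = i then (1:ℝ) else 0) - (if l = j then 1 else 0))))
      = yhat i * ((if k = i then (1:ℝ) else 0) * (if l = i then 1 else 0)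
          - (if k = i then (1:ℝ) else 0) * yhat l
          - yhat k * (if l = i then (1:ℝ) else 0)
          + (if k = l then yhat k else 0)) := by
    intro i
    have e1 : ∑ j, yhat i * yhat j *
        (((if k = i then (1:ℝ) else 0) - (if k = j then 1 else 0))
          * ((if l = i then (1:ℝ) else 0) - (if l = j then 1 else 0)))
        = yhat i * ((if k = i then (1:ℝ) else 0) * (if l = i then 1 else 0) * (∑ j, yhat j)
            - (if k = i then (1:ℝ) else 0) * (∑ j, yhat j * (if l = j then (1:ℝ) else 0))
            - (if l = i then (1:ℝ) else 0) * (∑ j, yhat j * (if k = j then (1:ℝ) else 0))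
            + (∑ j, yhat j * ((if k = j then (1:ℝ) else 0) * (if l = j then 1 else 0)))) := by
      simp only [Finset.mul_sum, ← Finset.sum_sub_distrib, ← Finset.sum_add_distrib]
      exact Finset.sum_congr rfl fun j _ => by ring
    rw [e1, hsum, hSl, hSk, hSkl]
    ring
  rw [Finset.sum_congr rfl fun i _ => inner i]
  have houter : ∑ i, yhat i * ((if k = i then (1:ℝ) else 0) * (if l = i then 1 else 0)
          - (if k = i then (1:ℝ) else 0) * yhat l
          - yhat k * (if l = i then (1:ℝ) else 0)
          + (if k = l then yhat k else 0))
      = (if k = l then yhat k else 0) - yhat k * yhat l - yhat k * yhat l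
        + (if k = l then yhat k else 0) := by
    have e2 : ∑ i, yhat i * ((if k = i then (1:ℝ) else 0) * (if l = i then 1 else 0)
          - (if k = i then (1:ℝ) else 0) * yhat l
          - yhat k * (if l = i then (1:ℝ) else 0)
          + (if k = l then yhat k else 0))
        = (∑ i, yhat i * ((if k = i then (1:ℝ) else 0) * (if l = i then 1 else 0)))
          - yhat l * (∑ i, yhat i * (if k = i then (1:ℝ) else 0))
          - yhat k * (∑ i, yhat i * (if l = i then (1:ℝ) else 0))
          + (if k = l then yhat k else 0) * (∑ i, yhat i) := by
      simp only [Finset.mul_sum, ← Finset.sum_sub_distrib, ← Finset.sum_add_distrib]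
      exact Finset.sum_congr rfl fun i _ => by ring
    rw [e2, hsum, hSl, hSk, hSkl]
    ring
  rw [houter]
  split_ifs <;> ring

lemma B_norm_le {K : ℕ} (yhat : Fin K → ℝ) (hpos : ∀ k, 0 ≤ yhat k)
    (hsum : ∑ k, yhat k = 1) :
    ‖Matrix.diagonal yhat - Matrix.vecMulVec yhat yhat‖ ≤ 1 - ∑ k, yhat k ^ 2 := by
  rw [B_decomp yhat hsum, norm_smul]
  have hvsum : ∀ i j : Fin K, (∑ m, (((Pi.single i 1 - Pi.single j 1 : Fin K → ℝ)) m) ^ 2)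
      = if i = j then 0 else 2 := by
    intro i j
    by_cases h : i = j
    · subst h; simp
    · rw [if_neg h]
      have : ∀ m, (((Pi.single i 1 - Pi.single j 1 : Fin K → ℝ)) m) ^ 2
          = (if m = i then (1:ℝ) else 0) + (if m = j then 1 else 0) := by
        intro m
        simp only [Pi.sub_apply, Pi.single_apply]
        rcases eq_or_ne m i with rfl | hmi
        · simp [h]
        · rcases eq_or_ne m j with rfl | hmj
          · simp [hmi]
          · simp [hmi, hmj]
      rw [Finset.sum_congr rfl fun m _ => this m, Finset.sum_add_distrib,
        Finset.sum_ite_eq', Finset.sum_ite_eq']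
      norm_num
  have step1 : ‖∑ i, ∑ j, (yhat i * yhat j) •
      Matrix.vecMulVec ((Pi.single i 1 - Pi.single j 1 : Fin K → ℝ)) ((Pi.single i 1 - Pi.single j 1 : Fin K → ℝ))‖
      ≤ ∑ i, ∑ j, (yhat i * yhat j) * (if i = j then 0 else 2) := by
    refine (norm_sum_le _ _).trans (Finset.sum_le_sum fun i _ => ?_)
    refine (norm_sum_le _ _).trans (Finset.sum_le_sum fun j _ => ?_)
    rw [norm_smul, Real.norm_eq_abs, abs_of_nonneg (mul_nonneg (hpos i) (hpos j))]
    refine mul_le_mul_of_nonneg_left ?_ (mul_nonneg (hpos i) (hpos j))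
    rw [← hvsum i j]
    exact rankone_norm_le _
  have step2 : ∑ i, ∑ j, (yhat i * yhat j) * (if i = j then (0:ℝ) else 2)
      = 2 * (1 - ∑ k, yhat k ^ 2) := by
    have : ∀ i j : Fin K, (yhat i * yhat j) * (if i = j then (0:ℝ) else 2)
        = 2 * (yhat i * yhat j) - (if i = j then 2 * yhat i ^ 2 else 0) := by
      intro i j; rcases eq_or_ne i j with rfl | h
      · simp [sq]
      · rw [if_neg h, if_neg h]; ring
    simp only [this, Finset.sum_sub_distrib, Finset.sum_ite_eq, Finset.mem_univ, if_true,
      ← Finset.mul_sum, ← Finset.sum_mul, hsum]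
    ring
  calc ‖(1/2 : ℝ)‖ * ‖∑ i, ∑ j, (yhat i * yhat j) •
      Matrix.vecMulVec ((Pi.single i 1 - Pi.single j 1 : Fin K → ℝ)) ((Pi.single i 1 - Pi.single j 1 : Fin K → ℝ))‖
      ≤ (1/2) * (2 * (1 - ∑ k, yhat k ^ 2)) := by
        rw [Real.norm_eq_abs, abs_of_nonneg (by norm_num : (0:ℝ) ≤ 1/2)]
        exact mul_le_mul_of_nonneg_left (step1.trans_eq step2) (by norm_num)
    _ = 1 - ∑ k, yhat k ^ 2 := by ring

/-- **Lemma (bound on the cross-entropy parameter Hessian).**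
With `H = Jᵀ(diag(ŷ) − ŷŷᵀ)J + ∑_k (ŷ_k − y_k)·A_k`, `‖J‖ ≤ M₁`, `‖A_k‖ ≤ M₂`, `ŷ` a
probability vector and `y` one-hot, we have
`‖H‖ ≤ M₁²·(1 − ‖ŷ‖₂²) + M₂·∑_k |ŷ_k − y_k|`. -/
theorem hessian_opNorm_bound
    (K d : ℕ) (hK : 1 ≤ K) (hd : 1 ≤ d) (M₁ M₂ : ℝ)
    (yhat : Fin K → ℝ) (hpos : ∀ k, 0 ≤ yhat k) (hsum : ∑ k, yhat k = 1)
    (y : Fin K → ℝ) (hy : ∃ r : Fin K, y = fun k => if k = r then (1 : ℝ) else 0)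
    (J : Matrix (Fin K) (Fin d) ℝ) (hJ : matOpNorm J ≤ M₁)
    (A : Fin K → Matrix (Fin d) (Fin d) ℝ)
    (hAsymm : ∀ k, (A k).IsSymm)
    (hA : ∀ k, matOpNorm (A k) ≤ M₂)
    (H : Matrix (Fin d) (Fin d) ℝ)
    (hH : H = Jᵀ * (Matrix.diagonal yhat - Matrix.vecMulVec yhat yhat) * J
        + ∑ k, (yhat k - y k) • A k) :
    matOpNorm H ≤ M₁ ^ 2 * (1 - ∑ k, yhat k ^ 2) + M₂ * ∑ k, |yhat k - y k| := by
  

  rw [matOpNorm_eq] at *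
  simp only [matOpNorm_eq] at hA
  have hM1 : 0 ≤ M₁ := (norm_nonneg J).trans hJ
  have hM2 : 0 ≤ M₂ := (norm_nonneg (A ⟨0, hK⟩)).trans (hA ⟨0, hK⟩)
  set B := Matrix.diagonal yhat - Matrix.vecMulVec yhat yhat with hB
  have hBn : ‖B‖ ≤ 1 - ∑ k, yhat k ^ 2 := B_norm_le yhat hpos hsum
  have hJt : ‖Jᵀ‖ = ‖J‖ := by
    rw [← Matrix.conjTranspose_eq_transpose_of_trivial, Matrix.l2_opNorm_conjTranspose]
  have h1 : ‖Jᵀ * B * J‖ ≤ M₁ ^ 2 * (1 - ∑ k, yhat k ^ 2) := by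
    calc ‖Jᵀ * B * J‖ ≤ ‖Jᵀ * B‖ * ‖J‖ := Matrix.l2_opNorm_mul _ _
      _ ≤ (‖Jᵀ‖ * ‖B‖) * ‖J‖ :=
          mul_le_mul_of_nonneg_right (Matrix.l2_opNorm_mul _ _) (norm_nonneg _)
      _ = ‖J‖ * ‖B‖ * ‖J‖ := by rw [hJt]
      _ ≤ (M₁ * (1 - ∑ k, yhat k ^ 2)) * M₁ := by
          have hnn : (0:ℝ) ≤ 1 - ∑ k, yhat k ^ 2 := (norm_nonneg B).trans hBn
          exact mul_le_mul (mul_le_mul hJ hBn (norm_nonneg B) hM1) hJ (norm_nonneg J)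
            (mul_nonneg hM1 hnn)
      _ = M₁ ^ 2 * (1 - ∑ k, yhat k ^ 2) := by ring
  have h2 : ‖∑ k, (yhat k - y k) • A k‖ ≤ M₂ * ∑ k, |yhat k - y k| := by
    calc ‖∑ k, (yhat k - y k) • A k‖ ≤ ∑ k, ‖(yhat k - y k) • A k‖ := norm_sum_le _ _
      _ ≤ ∑ k, |yhat k - y k| * M₂ := by
          refine Finset.sum_le_sum fun k _ => ?_
          rw [norm_smul, Real.norm_eq_abs]
          exact mul_le_mul_of_nonneg_left (hA k) (abs_nonneg _)
      _ = M₂ * ∑ k, |yhat k - y k| := by rw [← Finset.sum_mul]; ring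
  calc ‖H‖ = ‖Jᵀ * B * J + ∑ k, (yhat k - y k) • A k‖ := by rw [hH]
    _ ≤ ‖Jᵀ * B * J‖ + ‖∑ k, (yhat k - y k) • A k‖ := norm_add_le _ _
    _ ≤ M₁ ^ 2 * (1 - ∑ k, yhat k ^ 2) + M₂ * ∑ k, |yhat k - y k| := add_le_add h1 h2
end
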